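/- arXiv:2409.19428 — 6 statements merged into one kernel-verified Lean document; each statement's English description precedes it below -/
import Mathlib

section
/- Let x ∈ ℝⁿ, g = ∇f(x), B symmetric with spectral norm ‖B‖, σ > 0, θ₁ ∈ (0,1), and ν = θ₁/(‖B‖ + σ). Let s_cp minimize the Cauchy model m_cp(s) = f(x) + gᵀs + (1/(2ν))‖s‖² + ψ(s), with decrease ξ_cp := f(x) + ψ(0) − (f(x) + gᵀs_cp + ψ(s_cp)) ≥ (1/(2ν))‖s_cp‖². If s ∈ ℝⁿ satisfies m(s) ≤ m(s_cp), where m(s) = f(x) + gᵀs + ½sᵀBs + (σ/2)‖s‖² + ψ(s), then f(x) + ψ(0) − (f(x) + gᵀs + ½sᵀBs + ψ(s)) ≥ (1−θ₁)·ξ_cp. -/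
/-!
Since `ψ s` and `ψ s_cp` enter `m(s) ≤ m(s_cp)` and the definition of `ξ_cp` additively, moving
the real terms across reduces the claim to an inequality between reals. The
curvature of the model at `s_cp` is at most `(‖B‖ + σ)/2 · ‖s_cp‖² = θ₁/(2ν) · ‖s_cp‖² ≤ θ₁ ξ_cp`,
and the regularization term `σ/2 · ‖s‖²` is nonnegative.
-/

open scoped RealInnerProductSpace

theorem EReal.coe_add_le_coe_add_of_le {p q c d : ℝ} {x y : EReal}
    (hxy : (p : EReal) + x ≤ q + y) (hcd : c + q ≤ p + d) : (c : EReal) + x ≤ d + y :=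
  calc (c : EReal) + x = ↑(c - p) + (↑p + x) := by
        rw [← add_assoc, ← EReal.coe_add, _root_.sub_add_cancel]
    _ ≤ ↑(c - p) + (↑q + y) := add_le_add_right hxy _
    _ = ↑(c - p + q) + y := by rw [← add_assoc, EReal.coe_add]
    _ ≤ d + y := add_le_add_left (EReal.coe_le_coe_iff.2 (by linarith)) _

section

variable {E : Type*} [NormedAddCommGroup E] [InnerProductSpace ℝ E]

theorem ContinuousLinearMap.inner_apply_self_le_opNorm_mul_sq (B : E →L[ℝ] E) (x : E) :
    ⟪B x, x⟫ ≤ ‖B‖ * ‖x‖ ^ 2 :=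
  calc ⟪B x, x⟫ ≤ ‖B x‖ * ‖x‖ := real_inner_le_norm _ _
    _ ≤ ‖B‖ * ‖x‖ * ‖x‖ := by gcongr; exact B.le_opNorm x
    _ = ‖B‖ * ‖x‖ ^ 2 := by ring

theorem half_inner_apply_self_add_le_mul_of_le {B : E →L[ℝ] E} {σ θ ν ξ : ℝ}
    (hBσ : 0 < ‖B‖ + σ) (hθ : 0 < θ) (hν : ν = θ / (‖B‖ + σ)) {x : E}
    (hξ : 1 / (2 * ν) * ‖x‖ ^ 2 ≤ ξ) :
    1 / 2 * ⟪B x, x⟫ + σ / 2 * ‖x‖ ^ 2 ≤ θ * ξ :=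
  calc 1 / 2 * ⟪B x, x⟫ + σ / 2 * ‖x‖ ^ 2 ≤ (‖B‖ + σ) / 2 * ‖x‖ ^ 2 := by
        linarith [B.inner_apply_self_le_opNorm_mul_sq x]
    _ = θ * (1 / (2 * ν) * ‖x‖ ^ 2) := by subst hν; field_simp
    _ ≤ θ * ξ := by gcongr

end

theorem stmt3_general {n : ℕ} (ψ : EuclideanSpace ℝ (Fin n) → EReal)
    (g : EuclideanSpace ℝ (Fin n))
    (B : EuclideanSpace ℝ (Fin n) →L[ℝ] EuclideanSpace ℝ (Fin n))
    (σ θ₁ : ℝ) (hσ : 0 < σ) (hθ₁ : 0 < θ₁)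
    (ν : ℝ) (hν : ν = θ₁ / (‖B‖ + σ))
    (scp : EuclideanSpace ℝ (Fin n))
    (ξcp : ℝ)
    (hξdef : ((⟪g, scp⟫ : ℝ) : EReal) + ψ scp + ((ξcp : ℝ) : EReal) = ψ 0)
    (hξlb : 1 / (2 * ν) * ‖scp‖ ^ 2 ≤ ξcp)
    (s : EuclideanSpace ℝ (Fin n))
    (hms : ((⟪g, s⟫ + (1/2) * ⟪B s, s⟫ + σ / 2 * ‖s‖ ^ 2 : ℝ) : EReal) + ψ s ≤
      ((⟪g, scp⟫ + (1/2) * ⟪B scp, scp⟫ + σ / 2 * ‖scp‖ ^ 2 : ℝ) : EReal) + ψ scp) :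
    (((1 - θ₁) * ξcp : ℝ) : EReal) + (((⟪g, s⟫ + (1/2) * ⟪B s, s⟫ : ℝ) : EReal) + ψ s) ≤ ψ 0 := by
  have hcurv := half_inner_apply_self_add_le_mul_of_le (by positivity) hθ₁ hν hξlb
  have hreg : 0 ≤ σ / 2 * ‖s‖ ^ 2 := by positivity
  rw [← hξdef, add_right_comm, ← EReal.coe_add, ← add_assoc, ← EReal.coe_add]
  exact EReal.coe_add_le_coe_add_of_le hms (by linarith)

theorem stmt3 {n : ℕ} (ψ : EuclideanSpace ℝ (Fin n) → EReal)
    (hbot : ∀ z, ψ z ≠ ⊥) (hlsc : LowerSemicontinuous ψ) (hψ0 : ψ 0 ≠ ⊤)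
    (g : EuclideanSpace ℝ (Fin n))
    (B : EuclideanSpace ℝ (Fin n) →L[ℝ] EuclideanSpace ℝ (Fin n)) (hB : IsSelfAdjoint B)
    (σ θ₁ : ℝ) (hσ : 0 < σ) (hθ₁ : 0 < θ₁) (hθ₂ : θ₁ < 1)
    (ν : ℝ) (hν : ν = θ₁ / (‖B‖ + σ))
    (scp : EuclideanSpace ℝ (Fin n))
    (hcp : ∀ s, ((⟪g, scp⟫ + 1 / (2 * ν) * ‖scp‖ ^ 2 : ℝ) : EReal) + ψ scp ≤
      ((⟪g, s⟫ + 1 / (2 * ν) * ‖s‖ ^ 2 : ℝ) : EReal) + ψ s)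
    (ξcp : ℝ)
    (hξdef : ((⟪g, scp⟫ : ℝ) : EReal) + ψ scp + ((ξcp : ℝ) : EReal) = ψ 0)
    (hξlb : 1 / (2 * ν) * ‖scp‖ ^ 2 ≤ ξcp)
    (s : EuclideanSpace ℝ (Fin n))
    (hms : ((⟪g, s⟫ + (1/2) * ⟪B s, s⟫ + σ / 2 * ‖s‖ ^ 2 : ℝ) : EReal) + ψ s ≤
      ((⟪g, scp⟫ + (1/2) * ⟪B scp, scp⟫ + σ / 2 * ‖scp‖ ^ 2 : ℝ) : EReal) + ψ scp) :
    (((1 - θ₁) * ξcp : ℝ) : EReal) + (((⟪g, s⟫ + (1/2) * ⟪B s, s⟫ : ℝ) : EReal) + ψ s) ≤ ψ 0 :=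
  stmt3_general ψ g B σ θ₁ hσ hθ₁ ν hν scp ξcp hξdef hξlb s hms
end

section
/- With the setup of the Cauchy-decrease proposition, suppose instead that ν = θ₁/(β + σ), where β ≥ μ‖B‖ for some μ ∈ (0,1) with θ₁ < μ, and β ≤ ‖B‖. If s satisfies m(s) ≤ m(s_cp), then the model decrease satisfies f(x) + ψ(0) − (f(x) + gᵀs + ½sᵀBs + ψ(s)) ≥ (1 − θ₁/μ)·ξ_cp, with 1 − θ₁/μ > 0. -/
/-!
Since `ξ_cp ≥ ‖s_cp‖² / (2ν)` and `ν (‖B‖ + σ) = θ₁ (‖B‖ + σ)/(β + σ) ≤ θ₁/μ`, the curvature part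
`½⟪B s_cp, s_cp⟫ + σ/2 ‖s_cp‖² ≤ (‖B‖ + σ)/2 · ‖s_cp‖²` of `m(s_cp)` is at most `(θ₁/μ) ξ_cp`.
Hence `m(s) ≤ m(s_cp)` and dropping `σ/2 ‖s‖² ≥ 0` from `m(s)` give a decrease of at least
`(1 - θ₁/μ) ξ_cp` at `s`. The chain only adds real numbers to values of `ψ`, so it runs in `EReal`
without case analysis on infinite values.
-/

open scoped RealInnerProductSpace

theorem real_inner_apply_self_le {E : Type*} [NormedAddCommGroup E] [InnerProductSpace ℝ E]
    (T : E →L[ℝ] E) (x : E) : ⟪T x, x⟫ ≤ ‖T‖ * ‖x‖ ^ 2 :=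
  calc ⟪T x, x⟫ ≤ ‖T x‖ * ‖x‖ := real_inner_le_norm _ _
    _ ≤ ‖T‖ * ‖x‖ * ‖x‖ := by gcongr; exact T.le_opNorm x
    _ = ‖T‖ * ‖x‖ ^ 2 := by ring

theorem add_div_add_le_inv {μ b β σ : ℝ} (hμ0 : 0 < μ) (hμ1 : μ ≤ 1) (hσ : 0 ≤ σ)
    (hb : μ * b ≤ β) (hβσ : 0 < β + σ) : (b + σ) / (β + σ) ≤ μ⁻¹ := by
  rw [div_le_iff₀ hβσ, ← div_eq_inv_mul, le_div_iff₀ hμ0]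
  nlinarith

theorem add_div_two_mul_le_div_mul {b β σ θ μ t ξ : ℝ} (hσ : 0 < σ) (hθ : 0 < θ)
    (hμ0 : 0 < μ) (hμ1 : μ ≤ 1) (hb0 : 0 ≤ b) (hb : μ * b ≤ β) (ht : 0 ≤ t)
    (hξ : 1 / (2 * (θ / (β + σ))) * t ≤ ξ) : (b + σ) / 2 * t ≤ θ / μ * ξ := by
  have hβσ : 0 < β + σ := by nlinarith
  have hν : 0 < 2 * (θ / (β + σ)) := by positivity
  have hξ0 : 0 ≤ ξ := le_trans (by positivity) hξ
  rw [one_div, inv_mul_le_iff₀ hν] at hξ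
  calc (b + σ) / 2 * t ≤ (b + σ) / 2 * (2 * (θ / (β + σ)) * ξ) := by gcongr
    _ = θ * ((b + σ) / (β + σ)) * ξ := by ring
    _ ≤ θ * μ⁻¹ * ξ := by gcongr; exact add_div_add_le_inv hμ0 hμ1 hσ.le hb hβσ
    _ = θ / μ * ξ := by ring

theorem EReal.coe_add_add_le_of_add_le_add {x ξ c a b m : ℝ} {P Q R : EReal}
    (hP : (x : EReal) + Q + ξ = P) (hR : (a : EReal) + R ≤ b + Q) (hm : m ≤ a)
    (hb : c + b ≤ x + ξ) : (c : EReal) + (m + R) ≤ P :=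
  calc (c : EReal) + (m + R) ≤ c + (a + R) := by gcongr
    _ ≤ c + (b + Q) := by gcongr
    _ = ((c + b : ℝ) : EReal) + Q := by rw [EReal.coe_add, add_assoc]
    _ ≤ ((x + ξ : ℝ) : EReal) + Q := by gcongr
    _ = P := by rw [← hP, EReal.coe_add, add_right_comm]

theorem stmt4_general {n : ℕ} (ψ : EuclideanSpace ℝ (Fin n) → EReal)
    (g : EuclideanSpace ℝ (Fin n))
    (B : EuclideanSpace ℝ (Fin n) →L[ℝ] EuclideanSpace ℝ (Fin n))
    (σ θ₁ μ β : ℝ) (hσ : 0 < σ) (hθ₁ : 0 < θ₁) (hμ0 : 0 < μ) (hμ1 : μ < 1) (hθμ : θ₁ < μ)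
    (hβl : μ * ‖B‖ ≤ β)
    (ν : ℝ) (hν : ν = θ₁ / (β + σ))
    (scp : EuclideanSpace ℝ (Fin n))
    (ξcp : ℝ)
    (hξdef : ((⟪g, scp⟫ : ℝ) : EReal) + ψ scp + ((ξcp : ℝ) : EReal) = ψ 0)
    (hξlb : 1 / (2 * ν) * ‖scp‖ ^ 2 ≤ ξcp)
    (s : EuclideanSpace ℝ (Fin n))
    (hms : ((⟪g, s⟫ + (1/2) * ⟪B s, s⟫ + σ / 2 * ‖s‖ ^ 2 : ℝ) : EReal) + ψ s ≤
      ((⟪g, scp⟫ + (1/2) * ⟪B scp, scp⟫ + σ / 2 * ‖scp‖ ^ 2 : ℝ) : EReal) + ψ scp) :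
    0 < 1 - θ₁ / μ ∧
    (((1 - θ₁ / μ) * ξcp : ℝ) : EReal) + (((⟪g, s⟫ + (1/2) * ⟪B s, s⟫ : ℝ) : EReal) + ψ s) ≤ ψ 0 := by
  subst hν
  refine ⟨sub_pos.2 ((div_lt_one hμ0).2 hθμ), ?_⟩
  have hcurv : (1/2) * ⟪B scp, scp⟫ + σ / 2 * ‖scp‖ ^ 2 ≤ θ₁ / μ * ξcp := by
    have hquad := add_div_two_mul_le_div_mul hσ hθ₁ hμ0 hμ1.le (norm_nonneg B) hβl
      (by positivity) hξlb
    linarith [real_inner_apply_self_le B scp]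
  refine EReal.coe_add_add_le_of_add_le_add hξdef hms ?_ (by linarith)
  exact le_add_of_nonneg_right (by positivity)

theorem stmt4 {n : ℕ} (ψ : EuclideanSpace ℝ (Fin n) → EReal)
    (hbot : ∀ z, ψ z ≠ ⊥) (hlsc : LowerSemicontinuous ψ) (hψ0 : ψ 0 ≠ ⊤)
    (g : EuclideanSpace ℝ (Fin n))
    (B : EuclideanSpace ℝ (Fin n) →L[ℝ] EuclideanSpace ℝ (Fin n)) (hB : IsSelfAdjoint B)
    (σ θ₁ μ β : ℝ) (hσ : 0 < σ) (hθ₁ : 0 < θ₁) (hμ0 : 0 < μ) (hμ1 : μ < 1) (hθμ : θ₁ < μ)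
    (hβl : μ * ‖B‖ ≤ β) (hβu : β ≤ ‖B‖)
    (ν : ℝ) (hν : ν = θ₁ / (β + σ))
    (scp : EuclideanSpace ℝ (Fin n))
    (hcp : ∀ s, ((⟪g, scp⟫ + 1 / (2 * ν) * ‖scp‖ ^ 2 : ℝ) : EReal) + ψ scp ≤
      ((⟪g, s⟫ + 1 / (2 * ν) * ‖s‖ ^ 2 : ℝ) : EReal) + ψ s)
    (ξcp : ℝ)
    (hξdef : ((⟪g, scp⟫ : ℝ) : EReal) + ψ scp + ((ξcp : ℝ) : EReal) = ψ 0)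
    (hξlb : 1 / (2 * ν) * ‖scp‖ ^ 2 ≤ ξcp)
    (s : EuclideanSpace ℝ (Fin n))
    (hms : ((⟪g, s⟫ + (1/2) * ⟪B s, s⟫ + σ / 2 * ‖s‖ ^ 2 : ℝ) : EReal) + ψ s ≤
      ((⟪g, scp⟫ + (1/2) * ⟪B scp, scp⟫ + σ / 2 * ‖scp‖ ^ 2 : ℝ) : EReal) + ψ scp) :
    0 < 1 - θ₁ / μ ∧
    (((1 - θ₁ / μ) * ξcp : ℝ) : EReal) + (((⟪g, s⟫ + (1/2) * ⟪B s, s⟫ : ℝ) : EReal) + ψ s) ≤ ψ 0 :=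
  stmt4_general ψ g B σ θ₁ μ β hσ hθ₁ hμ0 hμ1 hθμ hβl ν hν scp ξcp hξdef hξlb s hms
end

section
/- Let γ₁ > 1, 0 < γ₃ ≤ 1, σ₀ > 0, b > 0, and τ ∈ ℕ with γ₃·γ₁^(τ−1) > 1. Let S ⊆ ℕ, S_j := {i ∈ S : i ≤ j}, and suppose that for each j, 1/r_j ≤ b/(γ₃^{|S_j|}·γ₁^{j−|S_j|}·σ₀) where r_j > 0. Let W_k^τ := {j : k₀ ≤ j ≤ k, j > τ|S_j|}. Then ∑_{j ∈ W_k^τ} 1/r_j ≤ (b/σ₀)·∑_{j=0}^{∞} (γ₃γ₁^{τ−1})^{−j/τ}, a bound independent of k. In particular, the partial sums ∑_{j ∈ W_k^τ} 1/r_j are uniformly bounded over k. -/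
/-! For `j ∈ W_k^τ` one has `|S_j| < j/τ`; since `γ₃ ≤ 1 < γ₁`, lowering the exponent of `γ₃` and
raising that of `γ₁` gives `γ₃^{|S_j|} γ₁^{j-|S_j|} ≥ (γ₃ γ₁^{τ-1})^{j/τ}`. Hence every term of the sum
is dominated by the corresponding term of the geometric series `(b/σ₀) ∑ q^{-j/τ}`, `q = γ₃ γ₁^{τ-1} > 1`. -/

open Real

lemma summable_inv_rpow_natCast_div {q τ : ℝ} (hq : 1 < q) (hτ : 0 < τ) :
    Summable fun j : ℕ => (q ^ ((j : ℝ) / τ))⁻¹ := by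
  have hq0 : 0 < q := one_pos.trans hq
  have hgeom : (fun j : ℕ => (q ^ ((j : ℝ) / τ))⁻¹) = fun j : ℕ => (q ^ (-τ⁻¹)) ^ j := by
    funext j
    rw [← rpow_natCast, ← rpow_mul hq0.le, ← rpow_neg hq0.le]
    ring_nf
  rw [hgeom]
  exact summable_geometric_of_lt_one (by positivity)
    (rpow_lt_one_of_one_lt_of_neg hq (neg_lt_zero.mpr (inv_pos.mpr hτ)))

lemma mul_rpow_sub_one_rpow_div_le {γ₁ γ₃ τ x s : ℝ} (hγ₁ : 1 ≤ γ₁) (hγ₃l : 0 < γ₃)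
    (hγ₃u : γ₃ ≤ 1) (hτ : 0 < τ) (hs : s ≤ x / τ) :
    (γ₃ * γ₁ ^ (τ - 1)) ^ (x / τ) ≤ γ₃ ^ s * γ₁ ^ (x - s) := by
  have hsplit : (γ₃ * γ₁ ^ (τ - 1)) ^ (x / τ) = γ₃ ^ (x / τ) * γ₁ ^ (x - x / τ) := by
    rw [mul_rpow hγ₃l.le (by positivity), ← rpow_mul (by linarith)]
    congr 2
    field_simp
  rw [hsplit]
  exact mul_le_mul (rpow_le_rpow_of_exponent_ge hγ₃l hγ₃u hs)
    (rpow_le_rpow_of_exponent_le hγ₁ (by linarith)) (by positivity) (by positivity)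

theorem stmt9_general (γ₁ γ₃ σ₀ b : ℝ) (hγ₁ : 1 < γ₁) (hγ₃l : 0 < γ₃) (hγ₃u : γ₃ ≤ 1)
    (hσ₀ : 0 < σ₀) (hb : 0 < b) (τ : ℕ) (hτ : 0 < τ)
    (hq : 1 < γ₃ * γ₁ ^ ((τ : ℝ) - 1))
    (S : Set ℕ) [DecidablePred (· ∈ S)] (r : ℕ → ℝ)
    (hbound : ∀ j : ℕ, 1 / r j ≤
      b / (γ₃ ^ ((((Finset.range (j + 1)).filter (· ∈ S)).card : ℝ)) *
           γ₁ ^ ((j : ℝ) - ((((Finset.range (j + 1)).filter (· ∈ S)).card : ℝ))) * σ₀))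
    (k₀ : ℕ) :
    (∀ k : ℕ, (∑ j ∈ (Finset.Icc k₀ k).filter
        (fun j => τ * (((Finset.range (j + 1)).filter (· ∈ S)).card) < j), 1 / r j) ≤
      (b / σ₀) * ∑' j : ℕ, ((γ₃ * γ₁ ^ ((τ : ℝ) - 1)) ^ ((j : ℝ) / (τ : ℝ)))⁻¹) ∧
    ∃ C : ℝ, ∀ k : ℕ, (∑ j ∈ (Finset.Icc k₀ k).filter
        (fun j => τ * (((Finset.range (j + 1)).filter (· ∈ S)).card) < j), 1 / r j) ≤ C := by
  set q := γ₃ * γ₁ ^ ((τ : ℝ) - 1)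
  have hτR : (0 : ℝ) < τ := Nat.cast_pos.mpr hτ
  have hterm : ∀ j : ℕ, τ * ((Finset.range (j + 1)).filter (· ∈ S)).card < j →
      1 / r j ≤ b / σ₀ * (q ^ ((j : ℝ) / τ))⁻¹ := by
    intro j hj
    have hcard : (((Finset.range (j + 1)).filter (· ∈ S)).card : ℝ) ≤ j / τ := by
      rw [le_div_iff₀ hτR, mul_comm]
      exact_mod_cast hj.le
    calc 1 / r j ≤ _ := hbound j
      _ ≤ b / (q ^ ((j : ℝ) / τ) * σ₀) := by
        gcongr
        exact mul_rpow_sub_one_rpow_div_le hγ₁.le hγ₃l hγ₃u hτR hcard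
      _ = b / σ₀ * (q ^ ((j : ℝ) / τ))⁻¹ := by
        rw [div_mul_eq_div_div_swap, div_eq_mul_inv]
  have hsum := (summable_inv_rpow_natCast_div hq hτR).mul_left (b / σ₀)
  have hpartial : ∀ k : ℕ, (∑ j ∈ (Finset.Icc k₀ k).filter
      (fun j => τ * (((Finset.range (j + 1)).filter (· ∈ S)).card) < j), 1 / r j) ≤
      (b / σ₀) * ∑' j : ℕ, (q ^ ((j : ℝ) / τ))⁻¹ := fun k =>
    calc _ ≤ ∑ j ∈ (Finset.Icc k₀ k).filter
          (fun j => τ * (((Finset.range (j + 1)).filter (· ∈ S)).card) < j),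
            b / σ₀ * (q ^ ((j : ℝ) / τ))⁻¹ :=
          Finset.sum_le_sum fun j hj => hterm j (Finset.mem_filter.mp hj).2
      _ ≤ ∑' j : ℕ, b / σ₀ * (q ^ ((j : ℝ) / τ))⁻¹ :=
          hsum.sum_le_tsum _ fun j _ => by positivity
      _ = _ := tsum_mul_left
  exact ⟨hpartial, _, hpartial⟩

theorem stmt9 (γ₁ γ₃ σ₀ b : ℝ) (hγ₁ : 1 < γ₁) (hγ₃l : 0 < γ₃) (hγ₃u : γ₃ ≤ 1)
    (hσ₀ : 0 < σ₀) (hb : 0 < b) (τ : ℕ) (hτ : 0 < τ)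
    (hq : 1 < γ₃ * γ₁ ^ ((τ : ℝ) - 1))
    (S : Set ℕ) [DecidablePred (· ∈ S)] (r : ℕ → ℝ) (hr : ∀ j, 0 < r j)
    (hbound : ∀ j : ℕ, 1 / r j ≤
      b / (γ₃ ^ ((((Finset.range (j + 1)).filter (· ∈ S)).card : ℝ)) *
           γ₁ ^ ((j : ℝ) - ((((Finset.range (j + 1)).filter (· ∈ S)).card : ℝ))) * σ₀))
    (k₀ : ℕ) :
    (∀ k : ℕ, (∑ j ∈ (Finset.Icc k₀ k).filter
        (fun j => τ * (((Finset.range (j + 1)).filter (· ∈ S)).card) < j), 1 / r j) ≤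
      (b / σ₀) * ∑' j : ℕ, ((γ₃ * γ₁ ^ ((τ : ℝ) - 1)) ^ ((j : ℝ) / (τ : ℝ)))⁻¹) ∧
    ∃ C : ℝ, ∀ k : ℕ, (∑ j ∈ (Finset.Icc k₀ k).filter
        (fun j => τ * (((Finset.range (j + 1)).filter (· ∈ S)).card) < j), 1 / r j) ≤ C :=
  stmt9_general γ₁ γ₃ σ₀ b hγ₁ hγ₃l hγ₃u hσ₀ hb τ hτ hq S r hbound k₀
end

section
/- Let F : ℝⁿ → ℝ ∪ {+∞}, {xₖ} a sequence with F(xₖ) ≥ F_low for all k, and C > 0. Suppose S ⊆ ℕ is an infinite set indexed increasingly by φ : ℕ → S with F(x_{φ(k)}) − F(x_{φ(k)+1}) ≥ C/(k+1)^p for all k and F non-increasing along the sequence, where 0 ≤ p < 1. If S(ε) is an initial segment of S of cardinality N, then F(x₀) − F_low ≥ C·((N+1)^{1−p} − 1)/(1−p), hence N ≤ ((1−p)(F(x₀) − F_low)/C + 1)^{1/(1−p)} − 1. -/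
/-!
Between successful iterations `F ∘ x` can only decrease, so summing the guaranteed decreases
over the first `N` successful iterations gives `C ∑_{k<N} (k+1)^(-p) ≤ F(x₀) - F_low`.
By Bernoulli's inequality (concavity of `t ↦ t^(1-p)`) each term `(k+1)^(-p)` dominates
`((k+2)^(1-p) - (k+1)^(1-p)) / (1-p)`, and these telescope to `((N+1)^(1-p) - 1) / (1-p)`.
-/

open Finset

lemma Real.rpow_add_one_sub_rpow_le {a : ℝ} (ha : 0 < a) {s : ℝ} (hs0 : 0 ≤ s) (hs1 : s ≤ 1) :
    (a + 1) ^ s - a ^ s ≤ s * a ^ (s - 1) := by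
  have hbern : (1 + a⁻¹) ^ s ≤ 1 + s * a⁻¹ :=
    rpow_one_add_le_one_add_mul_self (by linarith [inv_pos.2 ha]) hs0 hs1
  have hfactor : a + 1 = a * (1 + a⁻¹) := by field_simp
  calc (a + 1) ^ s - a ^ s = a ^ s * ((1 + a⁻¹) ^ s - 1) := by
        rw [hfactor, Real.mul_rpow ha.le (by positivity)]; ring
    _ ≤ a ^ s * (s * a⁻¹) := by gcongr; linarith
    _ = s * a ^ (s - 1) := by rw [Real.rpow_sub_one ha.ne']; ring

lemma rpow_one_sub_sub_one_le_mul_sum {p : ℝ} (hp0 : 0 ≤ p) (hp1 : p ≤ 1) (N : ℕ) :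
    ((N : ℝ) + 1) ^ (1 - p) - 1 ≤ (1 - p) * ∑ k ∈ range N, 1 / ((k : ℝ) + 1) ^ p := by
  have htel := sum_range_sub (fun k : ℕ => ((k : ℝ) + 1) ^ (1 - p)) N
  simp only [Nat.cast_add, Nat.cast_one, Nat.cast_zero, zero_add, Real.one_rpow] at htel
  rw [← htel, mul_sum]
  refine sum_le_sum fun k _ => ?_
  have hk : (0 : ℝ) < k + 1 := by positivity
  calc ((k : ℝ) + 1 + 1) ^ (1 - p) - ((k : ℝ) + 1) ^ (1 - p)
      ≤ (1 - p) * ((k : ℝ) + 1) ^ (1 - p - 1) :=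
        Real.rpow_add_one_sub_rpow_le hk (by linarith) (by linarith)
    _ = (1 - p) * (1 / ((k : ℝ) + 1) ^ p) := by
        rw [sub_sub_cancel_left, Real.rpow_neg hk.le, one_div]

lemma sum_le_sub_of_antitone {f : ℕ → ℝ} (hf : Antitone f) {φ : ℕ → ℕ} (hφ : StrictMono φ)
    {d : ℕ → ℝ} (hd : ∀ k, f (φ k + 1) + d k ≤ f (φ k)) (N : ℕ) :
    ∑ k ∈ range N, d k ≤ f 0 - f (φ N) := by
  induction N with
  | zero => simpa using hf (Nat.zero_le (φ 0))
  | succ N ih =>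
    have hstep : f (φ (N + 1)) ≤ f (φ N + 1) := hf (hφ N.lt_succ_self)
    rw [sum_range_succ]
    linarith [hd N]

lemma le_rpow_one_div_sub_one_of_le {C s D N : ℝ} (hC : 0 < C) (hs : 0 < s) (hN : 0 ≤ N)
    (h : C * ((N + 1) ^ s - 1) / s ≤ D) : N ≤ (s * D / C + 1) ^ (1 / s) - 1 := by
  have hpow : (N + 1) ^ s ≤ s * D / C + 1 := by
    rw [div_le_iff₀ hs] at h
    rw [div_add_one hC.ne', le_div_iff₀ hC]
    linarith
  have hbase : 0 ≤ s * D / C + 1 := (Real.rpow_nonneg (by linarith) s).trans hpow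
  have hroot := (Real.le_rpow_inv_iff_of_pos (by linarith) hbase hs).2 hpow
  rw [one_div]
  linarith

lemma EReal.coe_toReal_of_antitone {u : ℕ → EReal} (hu : Antitone u) (h0 : u 0 ≠ ⊤) {m : ℝ}
    (hm : ∀ k, (m : EReal) ≤ u k) (k : ℕ) : ((u k).toReal : EReal) = u k :=
  EReal.coe_toReal (ne_top_of_le_ne_top h0 (hu k.zero_le))
    (ne_bot_of_le_ne_bot (EReal.coe_ne_bot m) (hm k))

theorem stmt10_general {n : ℕ} (F : EuclideanSpace ℝ (Fin n) → EReal)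
    (x : ℕ → EuclideanSpace ℝ (Fin n)) (Flow : ℝ)
    (hlow : ∀ k, (Flow : EReal) ≤ F (x k))
    (hfin : F (x 0) ≠ ⊤)
    (hmono : ∀ k, F (x (k + 1)) ≤ F (x k))
    (C p : ℝ) (hC : 0 < C) (hp0 : 0 ≤ p) (hp1 : p < 1)
    (φ : ℕ → ℕ) (hφ : StrictMono φ)
    (hdec : ∀ k : ℕ, F (x (φ k + 1)) + ((C / ((k : ℝ) + 1) ^ p : ℝ) : EReal) ≤ F (x (φ k))) :
    ∀ N : ℕ,
      ((C * (((N : ℝ) + 1) ^ (1 - p) - 1) / (1 - p) : ℝ) : EReal) ≤ F (x 0) - (Flow : EReal) ∧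
      (N : ℝ) ≤ ((1 - p) * ((F (x 0)).toReal - Flow) / C + 1) ^ (1 / (1 - p)) - 1 := by
  intro N
  have hanti : Antitone fun k => F (x k) := antitone_nat_of_succ_le hmono
  have hcoe : ∀ k, ((F (x k)).toReal : EReal) = F (x k) :=
    EReal.coe_toReal_of_antitone hanti hfin hlow
  set f : ℕ → ℝ := fun k => (F (x k)).toReal
  have hf : Antitone f := fun i j hij => by
    simpa only [f, ← EReal.coe_le_coe_iff, hcoe] using hanti hij
  have hflow : ∀ k, Flow ≤ f k := fun k => by
    simpa only [f, ← EReal.coe_le_coe_iff, hcoe] using hlow k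
  have hdec' : ∀ k : ℕ, f (φ k + 1) + C / ((k : ℝ) + 1) ^ p ≤ f (φ k) := fun k => by
    simpa only [f, ← EReal.coe_le_coe_iff, EReal.coe_add, hcoe] using hdec k
  have hbound : C * (((N : ℝ) + 1) ^ (1 - p) - 1) / (1 - p) ≤ f 0 - Flow := by
    have hsum := rpow_one_sub_sub_one_le_mul_sum hp0 hp1.le N
    have hdescent := sum_le_sub_of_antitone hf hφ hdec' N
    simp only [← mul_one_div C, ← mul_sum] at hdescent
    rw [div_le_iff₀ (by linarith)]
    nlinarith [hflow (φ N)]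
  refine ⟨?_, le_rpow_one_div_sub_one_of_le hC (by linarith) N.cast_nonneg hbound⟩
  rw [← hcoe 0, ← EReal.coe_sub, EReal.coe_le_coe_iff]
  exact hbound

theorem stmt10 {n : ℕ} (F : EuclideanSpace ℝ (Fin n) → EReal)
    (x : ℕ → EuclideanSpace ℝ (Fin n)) (Flow : ℝ)
    (hlow : ∀ k, (Flow : EReal) ≤ F (x k))
    (hfin : F (x 0) ≠ ⊤)
    (hmono : ∀ k, F (x (k + 1)) ≤ F (x k))
    (C p : ℝ) (hC : 0 < C) (hp0 : 0 ≤ p) (hp1 : p < 1)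
    (S : Set ℕ) (hS : S.Infinite) (φ : ℕ → ℕ) (hφ : StrictMono φ) (hφS : ∀ k, φ k ∈ S)
    (hdec : ∀ k : ℕ, F (x (φ k + 1)) + ((C / ((k : ℝ) + 1) ^ p : ℝ) : EReal) ≤ F (x (φ k))) :
    ∀ N : ℕ,
      ((C * (((N : ℝ) + 1) ^ (1 - p) - 1) / (1 - p) : ℝ) : EReal) ≤ F (x 0) - (Flow : EReal) ∧
      (N : ℝ) ≤ ((1 - p) * ((F (x 0)).toReal - Flow) / C + 1) ^ (1 / (1 - p)) - 1 :=
  stmt10_general F x Flow hlow hfin hmono C p hC hp0 hp1 φ hφ hdec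
end

section
/- Let γ₁ > 1, 0 < γ₃ ≤ 1, σ₀ > 0. Suppose a sequence {σₖ} satisfies: for k in a set U (unsuccessful iterations), σₖ₊₁ ≥ γ₁σₖ; for k ∉ U, σₖ₊₁ ≥ γ₃σₖ. Then for all k, σₖ ≥ σ₀·γ₃^{|Sₖ|}·γ₁^{|Uₖ|}, where Sₖ and Uₖ are the successful and unsuccessful indices below k. Consequently, if σₖ ≤ σ_max for all k < K, then |U_{K}| ≤ |log_{γ₁}(γ₃)|·|S_{K}| + log_{γ₁}(σ_max/σ₀). -/
open Finset Real

theorem mul_prod_range_le_of_mul_le_succ {σ c : ℕ → ℝ} (hc : ∀ k, 0 ≤ c k)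
    (hstep : ∀ k, c k * σ k ≤ σ (k + 1)) (k : ℕ) :
    σ 0 * ∏ i ∈ range k, c i ≤ σ k := by
  induction k with
  | zero => simp
  | succ k ih =>
    calc σ 0 * ∏ i ∈ range (k + 1), c i = c k * (σ 0 * ∏ i ∈ range k, c i) := by
          rw [prod_range_succ]; ring
      _ ≤ c k * σ k := mul_le_mul_of_nonneg_left ih (hc k)
      _ ≤ σ (k + 1) := hstep k

theorem prod_range_ite_mem {M : Type*} [CommMonoid M] (U : Set ℕ) [DecidablePred (· ∈ U)]
    (a b : M) (k : ℕ) :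
    ∏ i ∈ range k, (if i ∈ U then a else b) =
      b ^ #{i ∈ range k | i ∉ U} * a ^ #{i ∈ range k | i ∈ U} := by
  rw [prod_ite, prod_const, prod_const, mul_comm]

theorem card_le_of_mul_pow_mul_pow_le {a b σ₀ M : ℝ} {m n : ℕ} (ha : 1 < a) (hb₀ : 0 < b)
    (hb₁ : b ≤ 1) (hσ₀ : 0 < σ₀) (h : σ₀ * b ^ n * a ^ m ≤ M) :
    (m : ℝ) ≤ |log b / log a| * n + log (M / σ₀) / log a := by
  have hpos : 0 < σ₀ * b ^ n * a ^ m := by positivity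
  have hloga : 0 < log a := log_pos ha
  have hlog : log σ₀ + n * log b + m * log a ≤ log M := by
    have := log_le_log hpos h
    rwa [log_mul (by positivity) (by positivity), log_mul (by positivity) (by positivity),
      log_pow, log_pow] at this
  rw [abs_div, abs_of_nonpos (log_nonpos hb₀.le hb₁), abs_of_pos hloga,
    log_div (hpos.trans_le h).ne' hσ₀.ne', div_mul_eq_mul_div, ← add_div, le_div_iff₀ hloga]
  linarith

theorem stmt13 (γ₁ γ₃ σ₀ : ℝ) (hγ₁ : 1 < γ₁) (hγ₃l : 0 < γ₃) (hγ₃u : γ₃ ≤ 1) (hσ₀ : 0 < σ₀)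
    (U : Set ℕ) [DecidablePred (· ∈ U)]
    (σ : ℕ → ℝ) (h0 : σ 0 = σ₀)
    (hU : ∀ k ∈ U, γ₁ * σ k ≤ σ (k + 1))
    (hSucc : ∀ k, k ∉ U → γ₃ * σ k ≤ σ (k + 1)) :
    (∀ k : ℕ, σ₀ * γ₃ ^ (((Finset.range k).filter (· ∉ U)).card) *
        γ₁ ^ (((Finset.range k).filter (· ∈ U)).card) ≤ σ k) ∧
    ∀ (K : ℕ) (σmax : ℝ), (∀ k ≤ K, σ k ≤ σmax) →
      ((((Finset.range K).filter (· ∈ U)).card : ℝ) ≤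
        |Real.log γ₃ / Real.log γ₁| * ((((Finset.range K).filter (· ∉ U)).card : ℝ)) +
        Real.log (σmax / σ₀) / Real.log γ₁) := by
  have hbound (k : ℕ) : σ₀ * γ₃ ^ #{i ∈ range k | i ∉ U} * γ₁ ^ #{i ∈ range k | i ∈ U} ≤ σ k := by
    have hc (i : ℕ) : 0 ≤ if i ∈ U then γ₁ else γ₃ := by
      split_ifs <;> linarith
    have hstep (i : ℕ) : (if i ∈ U then γ₁ else γ₃) * σ i ≤ σ (i + 1) := by
      split_ifs with hi
      exacts [hU i hi, hSucc i hi]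
    simpa only [h0, prod_range_ite_mem, mul_assoc] using
      mul_prod_range_le_of_mul_le_succ hc hstep k
  exact ⟨hbound, fun K σmax hmax =>
    card_le_of_mul_pow_mul_pow_le hγ₁ hγ₃l hγ₃u hσ₀ ((hbound K).trans (hmax K le_rfl))⟩
end

section
/- Let φ, ψ : ℝⁿ → ℝ ∪ {+∞}, x ∈ ℝⁿ, σ > 0, and suppose s minimizes m(·) := φ(·) + (σ/2)‖·‖² + ψ(·) up to the level m(s) ≤ m(0), with φ(0), ψ(0), φ(s), ψ(s) finite. Suppose the model-adequacy bound |(f+h)(x+s) − (φ(s) + ψ(s))| ≤ κ(1 + β)‖s‖² holds for constants κ > 0, β ≥ 0. Define ρ := ((f+h)(x) − (f+h)(x+s)) / (φ(0)+ψ(0) − φ(s) − ψ(s)), assuming φ(0)+ψ(0) = (f+h)(x) and the denominator is positive. Then |ρ − 1| ≤ 2κ(1+β)/σ. In particular, if σ ≥ 2κ(1+β)/(1−η₂) for some η₂ ∈ (0,1), then ρ ≥ η₂. -/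
theorem abs_div_sub_one_le_of_abs_sub_le {a D c t σ : ℝ} (hσ : 0 < σ) (hc : 0 ≤ c) (hD : 0 < D)
    (hdecrease : σ / 2 * t ≤ D) (herror : |a - D| ≤ c * t) :
    |a / D - 1| ≤ 2 * c / σ := by
  rw [div_sub_one hD.ne', abs_div, abs_of_pos hD, div_le_div_iff₀ hD hσ]
  calc |a - D| * σ ≤ c * t * σ := by gcongr
    _ = 2 * c * (σ / 2 * t) := by ring
    _ ≤ 2 * c * D := by gcongr

theorem stmt15_general {n : ℕ}
    (fh : EuclideanSpace ℝ (Fin n) → ℝ)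
    (x s : EuclideanSpace ℝ (Fin n)) (σ : ℝ) (hσ : 0 < σ)
    (p0 q0 ps qs : ℝ)
    (hm : ps + σ / 2 * ‖s‖ ^ 2 + qs ≤ p0 + q0)
    (κ β : ℝ) (hκ : 0 < κ) (hβ : 0 ≤ β)
    (hadeq : |fh (x + s) - (ps + qs)| ≤ κ * (1 + β) * ‖s‖ ^ 2)
    (hfhx : fh x = p0 + q0)
    (hden : 0 < p0 + q0 - ps - qs) :
    |(fh x - fh (x + s)) / (p0 + q0 - ps - qs) - 1| ≤ 2 * κ * (1 + β) / σ ∧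
    ∀ η₂ : ℝ, η₂ ∈ Set.Ioo (0 : ℝ) 1 → 2 * κ * (1 + β) / (1 - η₂) ≤ σ →
      η₂ ≤ (fh x - fh (x + s)) / (p0 + q0 - ps - qs) := by
  have herror : |fh x - fh (x + s) - (p0 + q0 - ps - qs)| ≤ κ * (1 + β) * ‖s‖ ^ 2 := by
    rw [abs_sub_comm, hfhx]
    convert hadeq using 2
    ring
  have hratio := abs_div_sub_one_le_of_abs_sub_le hσ (by positivity) hden (by linarith) herror
  rw [← mul_assoc] at hratio
  refine ⟨hratio, fun η₂ ⟨_, hη₂⟩ hση => ?_⟩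
  have hgap : 2 * κ * (1 + β) / σ ≤ 1 - η₂ := (div_le_comm₀ (by linarith) hσ).mp hση
  linarith [(abs_le.mp hratio).1]

theorem stmt15 {n : ℕ} (φ ψ : EuclideanSpace ℝ (Fin n) → EReal)
    (fh : EuclideanSpace ℝ (Fin n) → ℝ)
    (x s : EuclideanSpace ℝ (Fin n)) (σ : ℝ) (hσ : 0 < σ)
    (p0 q0 ps qs : ℝ) (hφ0 : φ 0 = (p0 : EReal)) (hψ0 : ψ 0 = (q0 : EReal))
    (hφs : φ s = (ps : EReal)) (hψs : ψ s = (qs : EReal))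
    (hm : ps + σ / 2 * ‖s‖ ^ 2 + qs ≤ p0 + q0)
    (κ β : ℝ) (hκ : 0 < κ) (hβ : 0 ≤ β)
    (hadeq : |fh (x + s) - (ps + qs)| ≤ κ * (1 + β) * ‖s‖ ^ 2)
    (hfhx : fh x = p0 + q0)
    (hden : 0 < p0 + q0 - ps - qs) :
    |(fh x - fh (x + s)) / (p0 + q0 - ps - qs) - 1| ≤ 2 * κ * (1 + β) / σ ∧
    ∀ η₂ : ℝ, η₂ ∈ Set.Ioo (0 : ℝ) 1 → 2 * κ * (1 + β) / (1 - η₂) ≤ σ →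
      η₂ ≤ (fh x - fh (x + s)) / (p0 + q0 - ps - qs) :=
  stmt15_general fh x s σ hσ p0 q0 ps qs hm κ β hκ hβ hadeq hfhx hden
end
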